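/- arXiv:1807.06707 — 6 statements merged into one kernel-verified Lean document; each statement's English description precedes it below -/
import Mathlib

section
/- Let G be a connected graph with positive edge weights x_{km}, let B be its weighted Laplacian (B_{kk} = Σ_{km∈δ(k)} 1/x_{km}, B_{km} = -1/x_{km} for edges km, 0 otherwise). Suppose Bθ = P and B θ̂ = P + Γ(e_s − e_t) where Γ > 0 and e_s, e_t are standard unit vectors. If k ≠ t is a vertex such that G contains a path from s to k avoiding t, then θ̂_k − θ̂_t > θ_k − θ_t. -/
/-!
The change of angles `u = θ̂ - θ` satisfies `B u = Γ (e_s - e_t)`: as a function on the graph it is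
superharmonic away from `t` and strictly so at `s`. By the strong minimum principle, a minimiser of
`u` on the vertices reachable from `s` avoiding `t` (together with `t`) passes its minimality on to
all of its neighbours, hence back along a walk to `s`, where strict superharmonicity forbids it.
So `t` is the only minimiser there, and `u t < u k`.
-/

open Matrix

variable {V : Type*} {G : SimpleGraph V} {w : V → V → ℝ} {u : V → ℝ} {j s t : V}

theorem SimpleGraph.Walk.start_mem_of_end_mem {Z : Set V}
    (hZ : ∀ x y, G.Adj x y → x ≠ t → y ∈ Z → x ∈ Z) :
    ∀ {a c : V} (q : G.Walk a c), t ∉ q.support → c ∈ Z → a ∈ Z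
  | _, _, .nil, _, hc => hc
  | _, _, .cons h q, ht, hc => by
    rw [support_cons, List.mem_cons, not_or] at ht
    exact hZ _ _ h (Ne.symm ht.1) (start_mem_of_end_mem hZ q ht.2 hc)

theorem mul_sub_nonpos_of_forall_adj_le
    (hpos : ∀ k m, G.Adj k m → 0 < w k m) (hzero : ∀ k m, ¬ G.Adj k m → w k m = 0)
    (hmin : ∀ m, G.Adj j m → u j ≤ u m) (m : V) :
    w j m * (u j - u m) ≤ 0 := by
  by_cases h : G.Adj j m
  · exact mul_nonpos_of_nonneg_of_nonpos (hpos j m h).le (sub_nonpos.2 (hmin m h))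
  · simp [hzero j m h]

variable [Fintype V]

def laplacian (w : V → V → ℝ) (u : V → ℝ) (j : V) : ℝ :=
  ∑ m, w j m * (u j - u m)

theorem mulVec_eq_laplacian [DecidableEq V] (hw : ∀ j, w j j = 0) {B : Matrix V V ℝ}
    (hB : ∀ k m, B k m = if k = m then ∑ j, w k j else -(w k m)) : B *ᵥ u = laplacian w u := by
  have hB' : B = diagonal (fun k => ∑ j, w k j) - of w := by
    ext k m
    rw [hB]
    by_cases hkm : k = m
    · subst hkm; simp [hw]
    · simp [hkm]
  ext j
  rw [hB', sub_mulVec, Pi.sub_apply, mulVec_diagonal, laplacian]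
  simp only [mul_sub, Finset.sum_sub_distrib, Finset.sum_mul, mulVec, dotProduct, of_apply]

theorem laplacian_nonpos_of_forall_adj_le
    (hpos : ∀ k m, G.Adj k m → 0 < w k m) (hzero : ∀ k m, ¬ G.Adj k m → w k m = 0)
    (hmin : ∀ m, G.Adj j m → u j ≤ u m) :
    laplacian w u j ≤ 0 :=
  Finset.sum_nonpos fun m _ => mul_sub_nonpos_of_forall_adj_le hpos hzero hmin m

theorem eq_of_adj_of_laplacian_eq_zero
    (hpos : ∀ k m, G.Adj k m → 0 < w k m) (hzero : ∀ k m, ¬ G.Adj k m → w k m = 0)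
    (hmin : ∀ m, G.Adj j m → u j ≤ u m)
    (h0 : laplacian w u j = 0) {a : V} (hadj : G.Adj j a) : u a = u j := by
  have hterm := (Finset.sum_eq_zero_iff_of_nonpos fun m _ =>
    mul_sub_nonpos_of_forall_adj_le hpos hzero hmin m).1 h0 a (Finset.mem_univ a)
  rcases mul_eq_zero.1 hterm with hw | hu
  · exact absurd hw (hpos j a hadj).ne'
  · linarith

theorem not_isMinOn_of_walk_avoiding
    (hpos : ∀ k m, G.Adj k m → 0 < w k m) (hzero : ∀ k m, ¬ G.Adj k m → w k m = 0)
    (hsuper : ∀ j ≠ t, 0 ≤ laplacian w u j) (hs : 0 < laplacian w u s)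
    {k : V} (q : G.Walk s k) (hq : t ∉ q.support) :
    ¬ IsMinOn u ({v | ∃ p : G.Walk s v, t ∉ p.support} ∪ {t}) k := by
  set R := {v | ∃ p : G.Walk s v, t ∉ p.support}
  have hR_ne : ∀ v ∈ R, v ≠ t := fun v ⟨p, hp⟩ h => hp (h ▸ p.end_mem_support)
  have hR_adj : ∀ v ∈ R, ∀ x, G.Adj v x → x ∈ R ∪ {t} := by
    rintro v ⟨p, hp⟩ x hadj
    by_cases hx : x = t
    · exact Or.inr hx
    · refine Or.inl ⟨p.concat hadj, ?_⟩
      simp [SimpleGraph.Walk.support_concat, hp, Ne.symm hx]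
  have hmin_adj : ∀ v ∈ R, IsMinOn u (R ∪ {t}) v → ∀ x, G.Adj v x → u v ≤ u x :=
    fun v hv hmin x hadj => isMinOn_iff.1 hmin x (hR_adj v hv x hadj)
  set Z := {v | v ∈ R ∧ IsMinOn u (R ∪ {t}) v}
  have hs_Z : s ∉ Z := fun ⟨hsR, hmin⟩ =>
    (laplacian_nonpos_of_forall_adj_le hpos hzero (hmin_adj s hsR hmin)).not_gt hs
  have hZ : ∀ x y, G.Adj x y → x ≠ t → y ∈ Z → x ∈ Z := by
    rintro x y hxy hxt ⟨hyR, hmin⟩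
    have h0 : laplacian w u y = 0 :=
      (laplacian_nonpos_of_forall_adj_le hpos hzero (hmin_adj y hyR hmin)).antisymm
        (hsuper y (hR_ne y hyR))
    have hxy_eq := eq_of_adj_of_laplacian_eq_zero hpos hzero (hmin_adj y hyR hmin) h0 hxy.symm
    refine ⟨(hR_adj y hyR x hxy.symm).resolve_right hxt, ?_⟩
    exact isMinOn_iff.2 fun i hi => hxy_eq ▸ isMinOn_iff.1 hmin i hi
  exact fun hmin => hs_Z (q.start_mem_of_end_mem hZ hq ⟨⟨q, hq⟩, hmin⟩)

theorem lt_of_walk_avoiding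
    (hpos : ∀ k m, G.Adj k m → 0 < w k m) (hzero : ∀ k m, ¬ G.Adj k m → w k m = 0)
    (hsuper : ∀ j ≠ t, 0 ≤ laplacian w u j) (hs : 0 < laplacian w u s)
    {k : V} (q : G.Walk s k) (hq : t ∉ q.support) : u t < u k := by
  set S := {v | ∃ p : G.Walk s v, t ∉ p.support} ∪ {t}
  obtain ⟨j, hjS, hj⟩ := S.exists_min_image u S.toFinite ⟨t, Or.inr rfl⟩
  have hjt : j = t := hjS.resolve_left fun ⟨p, hp⟩ =>
    not_isMinOn_of_walk_avoiding hpos hzero hsuper hs p hp (isMinOn_iff.2 hj)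
  subst hjt
  have hk := not_isMinOn_of_walk_avoiding hpos hzero hsuper hs q hq
  simp only [isMinOn_iff, not_forall, not_le] at hk
  obtain ⟨i, hi, hlt⟩ := hk
  exact (hj i hi).trans_lt hlt

theorem stmt_0_general {n : ℕ} (G : SimpleGraph (Fin n))
    (w : Fin n → Fin n → ℝ)
    (hpos : ∀ k m, G.Adj k m → 0 < w k m)
    (hzero : ∀ k m, ¬ G.Adj k m → w k m = 0)
    (B : Matrix (Fin n) (Fin n) ℝ)
    (hB : ∀ k m, B k m = if k = m then ∑ j, w k j else -(w k m))
    (θ θhat P : Fin n → ℝ) (s t : Fin n) (Γ : ℝ) (hΓ : 0 < Γ)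
    (h1 : B.mulVec θ = P)
    (h2 : B.mulVec θhat = P + Γ • ((Pi.single s 1 : Fin n → ℝ) - Pi.single t 1))
    (k : Fin n)
    (hpath : ∃ p : G.Walk s k, t ∉ p.support) :
    θhat k - θhat t > θ k - θ t := by
  obtain ⟨q, hq⟩ := hpath
  have hst : s ≠ t := fun h => hq (h ▸ q.start_mem_support)
  have hL : laplacian w (θhat - θ) = Γ • ((Pi.single s 1 : Fin n → ℝ) - Pi.single t 1) := by
    rw [← mulVec_eq_laplacian (fun j => hzero j j (G.irrefl)) hB, mulVec_sub, h1, h2,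
      add_sub_cancel_left]
  have hsuper : ∀ j ≠ t, 0 ≤ laplacian w (θhat - θ) j := fun j hjt => by
    rw [hL]
    by_cases hjs : j = s
    · simp [hjs, hst, hΓ.le]
    · simp [hjs, hjt]
  have hs : 0 < laplacian w (θhat - θ) s := by simpa [hL, hst] using hΓ
  have := lt_of_walk_avoiding hpos hzero hsuper hs q hq
  simp only [Pi.sub_apply] at this
  linarith

/-- Lemma 1 (change): under the DC power flow model with one unit pair injection
Γ at s and -Γ at t (Γ > 0), any bus k ≠ t reachable from s by a path avoiding t
has its phase angle (relative to t) strictly increased. -/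
theorem stmt_0 {n : ℕ} (G : SimpleGraph (Fin n)) (hconn : G.Connected)
    (w : Fin n → Fin n → ℝ)
    (hsym : ∀ k m, w k m = w m k)
    (hpos : ∀ k m, G.Adj k m → 0 < w k m)
    (hzero : ∀ k m, ¬ G.Adj k m → w k m = 0)
    (B : Matrix (Fin n) (Fin n) ℝ)
    (hB : ∀ k m, B k m = if k = m then ∑ j, w k j else -(w k m))
    (θ θhat P : Fin n → ℝ) (s t : Fin n) (Γ : ℝ) (hΓ : 0 < Γ)
    (h1 : B.mulVec θ = P)
    (h2 : B.mulVec θhat = P + Γ • ((Pi.single s 1 : Fin n → ℝ) - Pi.single t 1))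
    (k : Fin n) (hk : k ≠ t)
    (hpath : ∃ p : G.Walk s k, t ∉ p.support) :
    θhat k - θhat t > θ k - θ t :=
  stmt_0_general G w hpos hzero B hB θ θhat P s t Γ hΓ h1 h2 k hpath
end

section
/- Under the same setup (weighted Laplacian B of a connected graph, Bθ = P, Bθ̂ = P + Γ(e_s − e_t), Γ > 0), if k ≠ t is a vertex such that every path in G from s to k passes through t, then θ̂_k − θ̂_t = θ_k − θ_t. -/
open Matrix

/-!
Since `B (θ̂ - θ) = Γ (e_s - e_t)`, the difference `d = θ̂ - θ` is harmonic away from `s` and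
`t`. Let `S` be the set of vertices reachable from `k` without passing through `t`; it contains
neither `s` nor `t`, and `t` is the only vertex outside `S` adjacent to it. The function `g` equal
to `d - d_t` on `S` and to `0` elsewhere therefore satisfies `∑_u g_u (B g)_u = 0`, i.e. it has
zero Dirichlet energy `½ ∑ w_{uv} (g_u - g_v)²`, hence is constant on the connected graph; so
`d_k - d_t = g_k = g_t = 0`.
-/

namespace SimpleGraph

variable {V : Type*} {G : SimpleGraph V}

theorem Reachable.eq_of_forall_adj_eq {β : Type*} {f : V → β}
    (hf : ∀ u v, G.Adj u v → f u = f v) {a b : V} (h : G.Reachable a b) : f a = f b := by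
  obtain ⟨p⟩ := h
  induction p with
  | nil => rfl
  | cons hadj _ ih => exact (hf _ _ hadj).trans ih

def walkAvoidingSet (G : SimpleGraph V) (t k : V) : Set V :=
  {u | ∃ p : G.Walk k u, t ∉ p.support}

theorem mem_walkAvoidingSet_self {t k : V} (hk : k ≠ t) : k ∈ G.walkAvoidingSet t k :=
  ⟨.nil, by simpa using hk.symm⟩

theorem notMem_walkAvoidingSet (t k : V) : t ∉ G.walkAvoidingSet t k :=
  fun ⟨p, hp⟩ => hp p.end_mem_support

theorem notMem_walkAvoidingSet_of_forall_mem_support {t k s : V}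
    (h : ∀ p : G.Walk s k, t ∈ p.support) : s ∉ G.walkAvoidingSet t k := by
  rintro ⟨p, hp⟩
  simpa using hp (by simpa using h p.reverse)

theorem mem_walkAvoidingSet_of_adj {t k u v : V} (hu : u ∈ G.walkAvoidingSet t k)
    (hadj : G.Adj u v) (hv : v ≠ t) : v ∈ G.walkAvoidingSet t k := by
  obtain ⟨p, hp⟩ := hu
  refine ⟨p.concat hadj, ?_⟩
  rw [Walk.support_concat, List.mem_append, List.mem_singleton]
  rintro (h | h)
  exacts [hp h, hv h.symm]

end SimpleGraph

open SimpleGraph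

section WeightedLaplacian

variable {V : Type*} [Fintype V] {w : V → V → ℝ}

theorem laplacian_mulVec_apply [DecidableEq V] {B : Matrix V V ℝ}
    (hB : ∀ k m, B k m = if k = m then ∑ j, w k j else -(w k m)) (hdiag : ∀ u, w u u = 0)
    (x : V → ℝ) (u : V) : (B *ᵥ x) u = ∑ v, w u v * (x u - x v) := by
  have hBrow : ∀ v, B u v = (if u = v then ∑ j, w u j else 0) - w u v := by
    intro v
    by_cases h : u = v
    · subst h; simp [hB, hdiag]
    · simp [hB, h]
  simp only [mulVec, dotProduct, hBrow, sub_mul, ite_mul, zero_mul, Finset.sum_sub_distrib,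
    Finset.sum_ite_eq, Finset.mem_univ, if_true, mul_sub, Finset.sum_mul]

theorem sum_mul_sum_weighted_sub_eq (hsym : ∀ u v, w u v = w v u) (x : V → ℝ) :
    ∑ u, x u * ∑ v, w u v * (x u - x v) = (∑ u, ∑ v, w u v * (x u - x v) ^ 2) / 2 := by
  have hswap : ∑ u, ∑ v, w u v * (x u * (x u - x v))
      = ∑ u, ∑ v, w u v * (x v * (x v - x u)) := by
    rw [Finset.sum_comm]
    simp_rw [hsym]
  have hsplit : ∑ u, ∑ v, w u v * (x u - x v) ^ 2
      = ∑ u, ∑ v, w u v * (x u * (x u - x v)) + ∑ u, ∑ v, w u v * (x v * (x v - x u)) := by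
    simp only [← Finset.sum_add_distrib]
    exact Finset.sum_congr rfl fun u _ => Finset.sum_congr rfl fun v _ => by ring
  simp_rw [hsplit, ← hswap, Finset.mul_sum, mul_left_comm (x _)]
  ring

variable {G : SimpleGraph V}

theorem SimpleGraph.Reachable.eq_of_sum_weighted_sq_sub_eq_zero (hnn : ∀ u v, 0 ≤ w u v)
    (hpos : ∀ u v, G.Adj u v → 0 < w u v) {x : V → ℝ}
    (hx : ∑ u, ∑ v, w u v * (x u - x v) ^ 2 = 0) {a b : V} (hab : G.Reachable a b) :
    x a = x b := by
  have hterm : ∀ u v, w u v * (x u - x v) ^ 2 = 0 := fun u v =>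
    (Finset.sum_eq_zero_iff_of_nonneg fun v _ => mul_nonneg (hnn u v) (sq_nonneg _)).mp
      ((Finset.sum_eq_zero_iff_of_nonneg fun u _ => Finset.sum_nonneg fun v _ =>
        mul_nonneg (hnn u v) (sq_nonneg _)).mp hx u (Finset.mem_univ u)) v (Finset.mem_univ v)
  refine hab.eq_of_forall_adj_eq fun u v hadj => ?_
  have := (mul_eq_zero.mp (hterm u v)).resolve_left (hpos u v hadj).ne'
  exact sub_eq_zero.mp (pow_eq_zero_iff two_ne_zero |>.mp this)

theorem eq_of_harmonic_on_walkAvoidingSet (hsym : ∀ u v, w u v = w v u)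
    (hpos : ∀ u v, G.Adj u v → 0 < w u v) (hzero : ∀ u v, ¬ G.Adj u v → w u v = 0)
    {x : V → ℝ} {k t : V} (hk : k ≠ t) (hkt : G.Reachable k t)
    (hx : ∀ u ∈ G.walkAvoidingSet t k, ∑ v, w u v * (x u - x v) = 0) : x k = x t := by
  classical
  set S := G.walkAvoidingSet t k
  set g : V → ℝ := S.indicator fun u => x u - x t with hg
  have hgt : g t = 0 := Set.indicator_of_notMem (notMem_walkAvoidingSet t k) _
  have hharm : ∀ u ∈ S, ∑ v, w u v * (g u - g v) = 0 := by
    intro u hu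
    rw [← hx u hu]
    refine Finset.sum_congr rfl fun v _ => ?_
    by_cases hv : v ∈ S
    · simp only [hg, Set.indicator_of_mem hu, Set.indicator_of_mem hv]; ring
    by_cases hvt : v = t
    · rw [hvt, hgt]; simp only [hg, Set.indicator_of_mem hu, sub_zero]
    · rw [hzero u v fun hadj => hv (mem_walkAvoidingSet_of_adj hu hadj hvt), zero_mul, zero_mul]
  have henergy : ∑ u, ∑ v, w u v * (g u - g v) ^ 2 = 0 := by
    have : ∑ u, g u * ∑ v, w u v * (g u - g v) = 0 := Finset.sum_eq_zero fun u _ => by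
      by_cases hu : u ∈ S
      · rw [hharm u hu, mul_zero]
      · rw [hg, Set.indicator_of_notMem hu, zero_mul]
    linarith [sum_mul_sum_weighted_sub_eq hsym g]
  have hnn : ∀ u v, 0 ≤ w u v := fun u v => by
    by_cases hadj : G.Adj u v
    exacts [(hpos u v hadj).le, (hzero u v hadj).ge]
  have hgk := hkt.eq_of_sum_weighted_sq_sub_eq_zero hnn hpos henergy
  rw [hgt, hg, Set.indicator_of_mem (mem_walkAvoidingSet_self hk)] at hgk
  linarith

end WeightedLaplacian

theorem stmt_1_general {n : ℕ} (G : SimpleGraph (Fin n)) (hconn : G.Connected)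
    (w : Fin n → Fin n → ℝ)
    (hsym : ∀ k m, w k m = w m k)
    (hpos : ∀ k m, G.Adj k m → 0 < w k m)
    (hzero : ∀ k m, ¬ G.Adj k m → w k m = 0)
    (B : Matrix (Fin n) (Fin n) ℝ)
    (hB : ∀ k m, B k m = if k = m then ∑ j, w k j else -(w k m))
    (θ θhat P : Fin n → ℝ) (s t : Fin n) (Γ : ℝ)
    (h1 : B.mulVec θ = P)
    (h2 : B.mulVec θhat = P + Γ • ((Pi.single s 1 : Fin n → ℝ) - Pi.single t 1))
    (k : Fin n) (hk : k ≠ t)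
    (hpath : ∀ p : G.Walk s k, t ∈ p.support) :
    θhat k - θhat t = θ k - θ t := by
  have hBd : B *ᵥ (θhat - θ) = Γ • ((Pi.single s 1 : Fin n → ℝ) - Pi.single t 1) := by
    rw [mulVec_sub, h1, h2, add_sub_cancel_left]
  have hs := notMem_walkAvoidingSet_of_forall_mem_support hpath
  have hharm : ∀ u ∈ G.walkAvoidingSet t k, ∑ v, w u v * ((θhat - θ) u - (θhat - θ) v) = 0 := by
    intro u hu
    have hus : u ≠ s := fun h => hs (h ▸ hu)
    have hut : u ≠ t := fun h => notMem_walkAvoidingSet t k (h ▸ hu)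
    rw [← laplacian_mulVec_apply hB (fun u => hzero u u G.irrefl), hBd]
    simp [hus, hut]
  have := eq_of_harmonic_on_walkAvoidingSet hsym hpos hzero hk (hconn.preconnected k t) hharm
  simp only [Pi.sub_apply] at this
  linarith

/-- Lemma 3 (nochange): if every path from s to k passes through t, the
relative phase angle of k with respect to t is unchanged. -/
theorem stmt_1 {n : ℕ} (G : SimpleGraph (Fin n)) (hconn : G.Connected)
    (w : Fin n → Fin n → ℝ)
    (hsym : ∀ k m, w k m = w m k)
    (hpos : ∀ k m, G.Adj k m → 0 < w k m)
    (hzero : ∀ k m, ¬ G.Adj k m → w k m = 0)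
    (B : Matrix (Fin n) (Fin n) ℝ)
    (hB : ∀ k m, B k m = if k = m then ∑ j, w k j else -(w k m))
    (θ θhat P : Fin n → ℝ) (s t : Fin n) (Γ : ℝ) (hΓ : 0 < Γ)
    (h1 : B.mulVec θ = P)
    (h2 : B.mulVec θhat = P + Γ • ((Pi.single s 1 : Fin n → ℝ) - Pi.single t 1))
    (k : Fin n) (hk : k ≠ t)
    (hpath : ∀ p : G.Walk s k, t ∈ p.support) :
    θhat k - θhat t = θ k - θ t :=
  stmt_1_general G hconn w hsym hpos hzero B hB θ θhat P s t Γ h1 h2 k hk hpath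
end

section
/- Under the same DC power flow setup with Γ < 0 instead of Γ > 0: if k ≠ t is a vertex such that G contains a path from s to k avoiding t, then θ̂_k − θ̂_t < θ_k − θ_t. -/
open Matrix

/-! The difference δ = θ̂ − θ solves Bδ = Γ(e_s − e_t), so (Bδ)_v ≤ 0 at every v ≠ t and
(Bδ)_s = Γ < 0. Since (Bδ)_v = ∑_m w_{vm}(δ_v − δ_m), a vertex v ≠ t at which δ is maximal
passes the maximum on to all its neighbours (discrete maximum principle). Following a walk
from a maximiser to t shows that δ is maximal at t. If δ_k ≥ δ_t, then k is a maximiser too,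
and following the path from k back to s, which avoids t, makes s a maximiser, forcing
(Bδ)_s ≥ 0. -/

namespace SimpleGraph.Walk

variable {V : Type*} {G : SimpleGraph V}

theorem mem_or_mem_support_of_adj_closed {S : Set V} {t : V}
    (hS : ∀ ⦃v u⦄, G.Adj v u → v ≠ t → v ∈ S → u ∈ S) {a b : V} (p : G.Walk a b)
    (ha : a ∈ S) : b ∈ S ∨ (t ∈ S ∧ t ∈ p.support) := by
  by_contra! h
  obtain ⟨d, hd, hfst, hsnd⟩ := p.exists_boundary_dart S ha h.1
  have hfst_ne : d.fst ≠ t := by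
    rintro rfl
    exact h.2 hfst (p.dart_fst_mem_support_of_mem_darts hd)
  exact hsnd (hS d.adj hfst_ne hfst)

end SimpleGraph.Walk

theorem Finset.eq_of_sum_mul_sub_nonpos {ι : Type*} [Fintype ι] {w x : ι → ℝ} {c : ℝ}
    (hw : ∀ m, 0 ≤ w m) (hx : ∀ m, x m ≤ c) (hsum : ∑ m, w m * (c - x m) ≤ 0) {u : ι}
    (hu : 0 < w u) : x u = c := by
  have hterms : ∀ m ∈ Finset.univ, 0 ≤ w m * (c - x m) :=
    fun m _ => mul_nonneg (hw m) (sub_nonneg.mpr (hx m))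
  have hzero : w u * (c - x u) = 0 :=
    (Finset.sum_eq_zero_iff_of_nonneg hterms).mp
      (le_antisymm hsum (Finset.sum_nonneg hterms)) u (Finset.mem_univ u)
  linarith [(mul_eq_zero.mp hzero).resolve_left hu.ne']

structure IsWeightedLaplacian {V : Type*} [Fintype V] [DecidableEq V] (G : SimpleGraph V)
    (w : V → V → ℝ) (B : Matrix V V ℝ) : Prop where
  pos : ∀ k m, G.Adj k m → 0 < w k m
  zero : ∀ k m, ¬G.Adj k m → w k m = 0
  entry : ∀ k m, B k m = if k = m then ∑ j, w k j else -(w k m)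

namespace IsWeightedLaplacian

variable {V : Type*} [Fintype V] [DecidableEq V] {G : SimpleGraph V} {w : V → V → ℝ}
  {B : Matrix V V ℝ}

theorem mulVec_apply (hL : IsWeightedLaplacian G w B) (x : V → ℝ) (v : V) :
    (B *ᵥ x) v = ∑ m, w v m * (x v - x m) := by
  have hrow : ∀ m, B v m = (Pi.single v (∑ j, w v j) : V → ℝ) m - w v m := by
    intro m
    rcases eq_or_ne m v with rfl | hm
    · simp [hL.entry, hL.zero m m G.irrefl]
    · simp [hL.entry, hm, hm.symm]
  simp only [mulVec, dotProduct, hrow, sub_mul, Finset.sum_sub_distrib, Pi.single_apply,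
    ite_mul, zero_mul, Finset.sum_ite_eq', Finset.mem_univ, if_true, mul_sub, Finset.sum_mul]

theorem weight_nonneg (hL : IsWeightedLaplacian G w B) (k m : V) : 0 ≤ w k m := by
  by_cases h : G.Adj k m
  · exact (hL.pos k m h).le
  · exact (hL.zero k m h).ge

theorem mulVec_apply_nonneg_of_isMax (hL : IsWeightedLaplacian G w B) {x : V → ℝ} {v : V}
    (hmax : ∀ m, x m ≤ x v) : 0 ≤ (B *ᵥ x) v := by
  rw [hL.mulVec_apply]
  exact Finset.sum_nonneg fun m _ =>
    mul_nonneg (hL.weight_nonneg v m) (sub_nonneg.mpr (hmax m))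

theorem eq_of_adj_of_isMax (hL : IsWeightedLaplacian G w B) {x : V → ℝ} {v u : V}
    (hmax : ∀ m, x m ≤ x v) (hv : (B *ᵥ x) v ≤ 0) (hadj : G.Adj v u) : x u = x v := by
  rw [hL.mulVec_apply] at hv
  exact Finset.eq_of_sum_mul_sub_nonpos (hL.weight_nonneg v) hmax hv (hL.pos v u hadj)

theorem lt_of_mulVec_nonpos_of_walk (hL : IsWeightedLaplacian G w B) (hconn : G.Connected)
    {x : V → ℝ} {s t k : V} (hsub : ∀ v, v ≠ t → (B *ᵥ x) v ≤ 0) (hs : (B *ᵥ x) s < 0)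
    (p : G.Walk s k) (hp : t ∉ p.support) : x k < x t := by
  have : Nonempty V := hconn.nonempty
  obtain ⟨v₀, hv₀⟩ := Finite.exists_max x
  set S : Set V := {v | x v = x v₀}
  have hS : ∀ ⦃v u⦄, G.Adj v u → v ≠ t → v ∈ S → u ∈ S := by
    intro v u hadj hvt hv
    have hmax : ∀ m, x m ≤ x v := fun m => hv ▸ hv₀ m
    exact (hL.eq_of_adj_of_isMax hmax (hsub v hvt) hadj).trans hv
  have ht : x t = x v₀ := by
    obtain ⟨q⟩ := hconn.preconnected v₀ t
    rcases q.mem_or_mem_support_of_adj_closed hS rfl with h | h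
    exacts [h, h.1]
  by_contra! hkt
  have hk : x k = x v₀ := le_antisymm (hv₀ k) (ht ▸ hkt)
  have hsmax : x s = x v₀ := by
    rcases p.reverse.mem_or_mem_support_of_adj_closed hS hk with h | h
    · exact h
    · exact absurd (by simpa using h.2) hp
  have := hL.mulVec_apply_nonneg_of_isMax fun m => hsmax ▸ hv₀ m
  linarith

end IsWeightedLaplacian

theorem stmt_2_general {n : ℕ} (G : SimpleGraph (Fin n)) (hconn : G.Connected)
    (w : Fin n → Fin n → ℝ)
    (hpos : ∀ k m, G.Adj k m → 0 < w k m)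
    (hzero : ∀ k m, ¬ G.Adj k m → w k m = 0)
    (B : Matrix (Fin n) (Fin n) ℝ)
    (hB : ∀ k m, B k m = if k = m then ∑ j, w k j else -(w k m))
    (θ θhat P : Fin n → ℝ) (s t : Fin n) (Γ : ℝ) (hΓ : Γ < 0)
    (h1 : B.mulVec θ = P)
    (h2 : B.mulVec θhat = P + Γ • ((Pi.single s 1 : Fin n → ℝ) - Pi.single t 1))
    (k : Fin n)
    (hpath : ∃ p : G.Walk s k, t ∉ p.support) :
    θhat k - θhat t < θ k - θ t := by
  obtain ⟨p, hp⟩ := hpath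
  have hst : s ≠ t := fun h => hp (h ▸ p.start_mem_support)
  have hδ : ∀ v,
      (B *ᵥ (θhat - θ)) v = Γ * ((if v = s then 1 else 0) - if v = t then 1 else 0) := by
    simp [mulVec_sub, h1, h2, Pi.single_apply]
  have hsub : ∀ v, v ≠ t → (B *ᵥ (θhat - θ)) v ≤ 0 := by
    intro v hv
    rw [hδ, if_neg hv]
    split_ifs <;> linarith
  have hs : (B *ᵥ (θhat - θ)) s < 0 := by
    simpa [hδ, hst] using hΓ
  have := (IsWeightedLaplacian.mk hpos hzero hB).lt_of_mulVec_nonpos_of_walk hconn hsub hs p hp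
  simp only [Pi.sub_apply] at this
  linarith

/-- Variant of Lemma 1 with Γ < 0: the relative phase angle strictly decreases. -/
theorem stmt_2 {n : ℕ} (G : SimpleGraph (Fin n)) (hconn : G.Connected)
    (w : Fin n → Fin n → ℝ)
    (hsym : ∀ k m, w k m = w m k)
    (hpos : ∀ k m, G.Adj k m → 0 < w k m)
    (hzero : ∀ k m, ¬ G.Adj k m → w k m = 0)
    (B : Matrix (Fin n) (Fin n) ℝ)
    (hB : ∀ k m, B k m = if k = m then ∑ j, w k j else -(w k m))
    (θ θhat P : Fin n → ℝ) (s t : Fin n) (Γ : ℝ) (hΓ : Γ < 0)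
    (h1 : B.mulVec θ = P)
    (h2 : B.mulVec θhat = P + Γ • ((Pi.single s 1 : Fin n → ℝ) - Pi.single t 1))
    (k : Fin n) (hk : k ≠ t)
    (hpath : ∃ p : G.Walk s k, t ∉ p.support) :
    θhat k - θhat t < θ k - θ t :=
  stmt_2_general G hconn w hpos hzero B hB θ θhat P s t Γ hΓ h1 h2 k hpath
end

section
/- Under the DC flow setup with Γ > 0 (Bθ = P, Bθ̂ = P + Γ(e_s − e_t), G connected), it holds that θ̂_s − θ̂_t > θ_s − θ_t; in particular, with the normalization θ_t = θ̂_t = 0, θ̂_s − θ_s > 0. -/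
open Matrix

/-- θ̂_s - θ̂_t > θ_s - θ_t; in particular, with the normalization
θ_t = θ̂_t = 0, we get θ̂_s - θ_s > 0. -/
theorem stmt_4 {n : ℕ} (G : SimpleGraph (Fin n)) (hconn : G.Connected)
    (w : Fin n → Fin n → ℝ)
    (hsym : ∀ k m, w k m = w m k)
    (hpos : ∀ k m, G.Adj k m → 0 < w k m)
    (hzero : ∀ k m, ¬ G.Adj k m → w k m = 0)
    (B : Matrix (Fin n) (Fin n) ℝ)
    (hB : ∀ k m, B k m = if k = m then ∑ j, w k j else -(w k m))
    (θ θhat P : Fin n → ℝ) (s t : Fin n) (hst : s ≠ t) (Γ : ℝ) (hΓ : 0 < Γ)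
    (h1 : B.mulVec θ = P)
    (h2 : B.mulVec θhat = P + Γ • ((Pi.single s 1 : Fin n → ℝ) - Pi.single t 1)) :
    θhat s - θhat t > θ s - θ t ∧ (θ t = 0 → θhat t = 0 → θhat s - θ s > 0) := by
  have hwkk : ∀ k, w k k = 0 := fun k => hzero k k (G.irrefl)
  have hwnn : ∀ k m, 0 ≤ w k m := by
    intro k m
    by_cases h : G.Adj k m
    · exact le_of_lt (hpos k m h)
    · rw [hzero k m h]
  set δ : Fin n → ℝ := fun i => θhat i - θ i with hδdef
  -- (Bx)_k = ∑_m w k m (x k - x m)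
  have key : ∀ (x : Fin n → ℝ) (k : Fin n),
      B.mulVec x k = ∑ m, w k m * (x k - x m) := by
    intro x k
    simp only [Matrix.mulVec, dotProduct]
    have hterm : ∀ m ∈ Finset.univ, B k m * x m =
        (if k = m then (∑ j, w k j) * x k else 0) - w k m * x m := by
      intro m _
      rw [hB]
      by_cases h : k = m
      · subst h; simp [hwkk k]
      · simp [h]
    rw [Finset.sum_congr rfl hterm, Finset.sum_sub_distrib,
        Finset.sum_ite_eq, if_pos (Finset.mem_univ k)]
    simp [mul_sub, Finset.sum_sub_distrib, ← Finset.sum_mul]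
  -- net flow out of each node for the difference vector δ
  have hflow : ∀ k, ∑ m, w k m * (δ k - δ m) =
      Γ * ((if k = s then 1 else 0) - (if k = t then 1 else 0)) := by
    intro k
    have e1 := congrFun h1 k
    have e2 := congrFun h2 k
    rw [key] at e1 e2
    have hsplit : (∑ m, w k m * (δ k - δ m)) =
        (∑ m, w k m * (θhat k - θhat m)) - ∑ m, w k m * (θ k - θ m) := by
      rw [← Finset.sum_sub_distrib]
      apply Finset.sum_congr rfl
      intro m _
      simp only [hδdef]
      ring
    rw [hsplit, e1, e2]
    simp only [Pi.add_apply, Pi.smul_apply, Pi.sub_apply, Pi.single_apply,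
      smul_eq_mul]
    ring
  set Q : ℝ := ∑ k, ∑ m, w k m * (δ k - δ m) ^ 2 with hQdef
  have hQnn : 0 ≤ Q := by
    apply Finset.sum_nonneg
    intro k _
    apply Finset.sum_nonneg
    intro m _
    exact mul_nonneg (hwnn k m) (sq_nonneg _)
  -- ∑ δ_k * (net flow)_k = Γ (δ_s - δ_t)
  have hsum : ∑ k, δ k * (∑ m, w k m * (δ k - δ m)) = Γ * (δ s - δ t) := by
    calc ∑ k, δ k * (∑ m, w k m * (δ k - δ m))
        = ∑ k, δ k * (Γ * ((if k = s then 1 else 0) - (if k = t then 1 else 0))) := by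
          apply Finset.sum_congr rfl
          intro k _
          rw [hflow k]
      _ = ∑ k, ((if k = s then Γ * δ k else 0) - (if k = t then Γ * δ k else 0)) := by
          apply Finset.sum_congr rfl
          intro k _
          by_cases h1' : k = s <;> by_cases h2' : k = t <;> simp [h1', h2', hst, Ne.symm hst] <;> ring
      _ = Γ * (δ s - δ t) := by
          rw [Finset.sum_sub_distrib, Finset.sum_ite_eq', Finset.sum_ite_eq',
            if_pos (Finset.mem_univ s), if_pos (Finset.mem_univ t)]
          ring
  have hA : ∑ k, ∑ m, w k m * (δ k - δ m) * δ k = Γ * (δ s - δ t) := by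
    rw [← hsum]
    apply Finset.sum_congr rfl
    intro k _
    rw [Finset.mul_sum]
    apply Finset.sum_congr rfl
    intro m _
    ring
  have hBneg : ∑ k, ∑ m, w k m * (δ k - δ m) * δ m = -(Γ * (δ s - δ t)) := by
    rw [Finset.sum_comm]
    have step : ∀ m ∈ Finset.univ, (∑ k, w k m * (δ k - δ m) * δ m) =
        ∑ k, -(w m k * (δ m - δ k) * δ m) := by
      intro m _
      apply Finset.sum_congr rfl
      intro k _
      rw [hsym k m]
      ring
    rw [Finset.sum_congr rfl step]
    simp only [Finset.sum_neg_distrib]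
    rw [hA]
  have hQeq : Q = 2 * Γ * (δ s - δ t) := by
    have hsplit : Q = (∑ k, ∑ m, w k m * (δ k - δ m) * δ k)
        - (∑ k, ∑ m, w k m * (δ k - δ m) * δ m) := by
      rw [hQdef, ← Finset.sum_sub_distrib]
      apply Finset.sum_congr rfl
      intro k _
      rw [← Finset.sum_sub_distrib]
      apply Finset.sum_congr rfl
      intro m _
      ring
    rw [hsplit, hA, hBneg]
    ring
  have hQpos : 0 < Q := by
    rcases hQnn.lt_or_eq with h | h
    · exact h
    · exfalso
      have hz : ∀ k m, w k m * (δ k - δ m) ^ 2 = 0 := by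
        intro k m
        have houter := (Finset.sum_eq_zero_iff_of_nonneg
          (fun k _ => Finset.sum_nonneg fun m _ =>
            mul_nonneg (hwnn k m) (sq_nonneg _))).mp h.symm k (Finset.mem_univ k)
        exact (Finset.sum_eq_zero_iff_of_nonneg
          (fun m _ => mul_nonneg (hwnn k m) (sq_nonneg _))).mp houter m (Finset.mem_univ m)
      have heq : ∀ k m, w k m * (δ k - δ m) = 0 := by
        intro k m
        rcases mul_eq_zero.mp (hz k m) with h' | h'
        · rw [h', zero_mul]
        · rw [sq_eq_zero_iff.mp h', mul_zero]
      have hs0 : ∑ m, w s m * (δ s - δ m) = 0 :=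
        Finset.sum_eq_zero fun m _ => heq s m
      have hfs := hflow s
      rw [hs0, if_pos rfl, if_neg hst] at hfs
      have : (0 : ℝ) = Γ := by linarith [hfs]
      linarith
  have hkey : 0 < δ s - δ t := by
    by_contra hcon
    push_neg at hcon
    nlinarith [hQeq, hQpos, mul_nonneg hΓ.le (neg_nonneg.mpr hcon)]
  have hkey' : 0 < (θhat s - θ s) - (θhat t - θ t) := hkey
  constructor
  · linarith
  · intro ht1 ht2
    linarith
end

section
/- Let V_k, V_m, I_mk be complex numbers with I_mk = Y3·V_k + Y4·V_m where Y3 ≠ 0, Y4 are complex constants, and let Z3 = Y3^{-1}. Suppose V_k^S, V_m^S, I_mk^S are complex numbers satisfying the TVE bounds |V_k^S − V_k| < τ|V_k|, |V_m^S − V_m| < τ|V_m|, |I_mk^S − I_mk| < τ|I_mk| with 0 < τ < 1. Then |V_k^S − Z3(I_mk^S − Y4·V_m^S)| < (2τ|Z3|/(1−τ))(|I_mk^S| + |Y4||V_m^S|). -/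
/-- Criterion 1: if the true phasors satisfy I_mk = Y3 V_k + Y4 V_m (Y3 ≠ 0,
Z3 = Y3⁻¹) and the sensed values satisfy the TVE bounds, then the sensed
residual is bounded by (2τ|Z3|/(1-τ))(|I_mk^S| + |Y4||V_m^S|). -/
theorem stmt_6 (Vk Vm Imk VkS VmS ImkS Y3 Y4 Z3 : ℂ)
    (hY3 : Y3 ≠ 0) (hZ3 : Z3 = Y3⁻¹)
    (hrel : Imk = Y3 * Vk + Y4 * Vm)
    (τ : ℝ) (hτ0 : 0 < τ) (hτ1 : τ < 1)
    (hVk : ‖VkS - Vk‖ < τ * ‖Vk‖)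
    (hVm : ‖VmS - Vm‖ < τ * ‖Vm‖)
    (hImk : ‖ImkS - Imk‖ < τ * ‖Imk‖) :
    ‖VkS - Z3 * (ImkS - Y4 * VmS)‖ <
      (2 * τ * ‖Z3‖ / (1 - τ)) *
        (‖ImkS‖ + ‖Y4‖ * ‖VmS‖) := by
  have hZ3Y3 : Z3 * Y3 = 1 := by
    rw [hZ3]; exact inv_mul_cancel₀ hY3
  have hZ3ne : Z3 ≠ 0 := by
    rw [hZ3]; exact inv_ne_zero hY3
  have hid : VkS - Z3 * (ImkS - Y4 * VmS)
      = (VkS - Vk) - Z3 * (ImkS - Imk) + Z3 * Y4 * (VmS - Vm) := by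
    rw [hrel]; linear_combination (-Vk) * hZ3Y3
  have hVkid : Vk = Z3 * Imk - Z3 * Y4 * Vm := by
    rw [hrel]; linear_combination (-Vk) * hZ3Y3
  have hz0 : (0:ℝ) < ‖Z3‖ := norm_pos_iff.mpr hZ3ne
  have hy0 : (0:ℝ) ≤ ‖Y4‖ := norm_nonneg _
  have h1τ : 0 < 1 - τ := by linarith
  have hVkbound : ‖Vk‖ ≤ ‖Z3‖ * (‖Imk‖ + ‖Y4‖ * ‖Vm‖) := by
    rw [hVkid]
    calc ‖Z3 * Imk - Z3 * Y4 * Vm‖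
        ≤ ‖Z3 * Imk‖ + ‖Z3 * Y4 * Vm‖ := norm_sub_le _ _
      _ = ‖Z3‖ * (‖Imk‖ + ‖Y4‖ * ‖Vm‖) := by simp only [norm_mul]; ring
  have hI2 : (1 - τ) * ‖Imk‖ < ‖ImkS‖ := by
    have := norm_sub_norm_le Imk ImkS
    rw [norm_sub_rev] at this
    nlinarith [this, hImk]
  have hV2 : (1 - τ) * ‖Vm‖ < ‖VmS‖ := by
    have := norm_sub_norm_le Vm VmS
    rw [norm_sub_rev] at this
    nlinarith [this, hVm]
  have htri : ‖VkS - Z3 * (ImkS - Y4 * VmS)‖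
      ≤ ‖VkS - Vk‖ + ‖Z3‖ * ‖ImkS - Imk‖ + ‖Z3‖ * ‖Y4‖ * ‖VmS - Vm‖ := by
    rw [hid]
    calc ‖(VkS - Vk) - Z3 * (ImkS - Imk) + Z3 * Y4 * (VmS - Vm)‖
        ≤ ‖(VkS - Vk) - Z3 * (ImkS - Imk)‖ + ‖Z3 * Y4 * (VmS - Vm)‖ := norm_add_le _ _
      _ ≤ ‖VkS - Vk‖ + ‖Z3 * (ImkS - Imk)‖ + ‖Z3 * Y4 * (VmS - Vm)‖ := by
            have := norm_sub_le (VkS - Vk) (Z3 * (ImkS - Imk))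
            linarith
      _ = ‖VkS - Vk‖ + ‖Z3‖ * ‖ImkS - Imk‖ + ‖Z3‖ * ‖Y4‖ * ‖VmS - Vm‖ := by
            simp only [norm_mul]
  have hA : ‖VkS - Z3 * (ImkS - Y4 * VmS)‖
      ≤ 2 * τ * ‖Z3‖ * (‖Imk‖ + ‖Y4‖ * ‖Vm‖) := by
    have b1 : ‖Z3‖ * ‖ImkS - Imk‖ ≤ ‖Z3‖ * (τ * ‖Imk‖) :=
      mul_le_mul_of_nonneg_left hImk.le hz0.le
    have b2 : ‖Z3‖ * ‖Y4‖ * ‖VmS - Vm‖ ≤ ‖Z3‖ * ‖Y4‖ * (τ * ‖Vm‖) :=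
      mul_le_mul_of_nonneg_left hVm.le (by positivity)
    have b3 : τ * ‖Vk‖ ≤ τ * (‖Z3‖ * (‖Imk‖ + ‖Y4‖ * ‖Vm‖)) :=
      mul_le_mul_of_nonneg_left hVkbound hτ0.le
    nlinarith [htri, hVk, b1, b2, b3]
  rw [div_mul_eq_mul_div, lt_div_iff₀ h1τ]
  have h2τz : (0:ℝ) < 2 * τ * ‖Z3‖ := by positivity
  calc ‖VkS - Z3 * (ImkS - Y4 * VmS)‖ * (1 - τ)
      ≤ (2 * τ * ‖Z3‖ * (‖Imk‖ + ‖Y4‖ * ‖Vm‖)) * (1 - τ) :=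
        mul_le_mul_of_nonneg_right hA h1τ.le
    _ = 2 * τ * ‖Z3‖ * ((1 - τ) * ‖Imk‖ + ‖Y4‖ * ((1 - τ) * ‖Vm‖)) := by ring
    _ < 2 * τ * ‖Z3‖ * (‖ImkS‖ + ‖Y4‖ * ‖VmS‖) := by
        apply mul_lt_mul_of_pos_left _ h2τz
        have := mul_le_mul_of_nonneg_left hV2.le hy0
        linarith
end

section
/- Under the DC flow setup (connected weighted graph, Laplacian B, Bθ = P, Bθ̂ = P + Γ(e_s − e_t), Γ > 0, normalization θ_t = θ̂_t = 0): the set A of vertices k ≠ t reachable from s by a path avoiding t satisfies θ̂_k − θ_k > 0 for all k ∈ A, and θ̂_k − θ_k = 0 for all k ∉ A ∪ {t}. -/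
open Matrix

/-- Combination of Lemmas 1 and 3: with normalization θ_t = θ̂_t = 0, all
buses reachable from s avoiding t have θ̂_k - θ_k > 0, while every other bus
(except t) has θ̂_k - θ_k = 0. -/
theorem stmt_15 {n : ℕ} (G : SimpleGraph (Fin n)) (hconn : G.Connected)
    (w : Fin n → Fin n → ℝ)
    (hsym : ∀ k m, w k m = w m k)
    (hpos : ∀ k m, G.Adj k m → 0 < w k m)
    (hzero : ∀ k m, ¬ G.Adj k m → w k m = 0)
    (B : Matrix (Fin n) (Fin n) ℝ)
    (hB : ∀ k m, B k m = if k = m then ∑ j, w k j else -(w k m))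
    (θ θhat P : Fin n → ℝ) (s t : Fin n) (Γ : ℝ) (hΓ : 0 < Γ)
    (h1 : B.mulVec θ = P)
    (h2 : B.mulVec θhat = P + Γ • ((Pi.single s 1 : Fin n → ℝ) - Pi.single t 1))
    (hnorm : θ t = 0) (hnorm' : θhat t = 0) :
    (∀ k, k ≠ t → (∃ p : G.Walk s k, t ∉ p.support) → 0 < θhat k - θ k) ∧
    (∀ k, k ≠ t → (∀ p : G.Walk s k, t ∈ p.support) → θhat k - θ k = 0) := by
  classical
  have hwirr : ∀ x, w x x = 0 := fun x => hzero x x (G.irrefl)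
  set Δ : Fin n → ℝ := fun x => θhat x - θ x with hΔdef
  have hΔt : Δ t = 0 := by simp [hΔdef, hnorm, hnorm']
  -- master equation
  have hsum : ∀ x, ∑ j, w x j * (Δ x - Δ j)
      = (if x = s then Γ else 0) - (if x = t then Γ else 0) := by
    intro x
    have h3 : B.mulVec Δ = Γ • ((Pi.single s 1 : Fin n → ℝ) - Pi.single t 1) := by
      have hd : Δ = θhat - θ := rfl
      rw [hd, Matrix.mulVec_sub, h1, h2]
      abel
    have h4 : (B.mulVec Δ) x = (if x = s then Γ else 0) - (if x = t then Γ else 0) := by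
      rw [h3]
      simp only [Pi.smul_apply, Pi.sub_apply, Pi.single_apply, smul_eq_mul, mul_sub]
      by_cases hx1 : x = s <;> by_cases hx2 : x = t <;> simp [hx1, hx2]
    rw [← h4]
    simp only [Matrix.mulVec, dotProduct]
    have h5 : ∀ j : Fin n, B x j * Δ j
        = (if j = x then (∑ i, w x i) * Δ x else 0) - w x j * Δ j := by
      intro j
      rw [hB]
      by_cases hj : x = j
      · rw [← hj]; simp [hwirr x]
      · rw [if_neg hj, if_neg (Ne.symm hj)]; ring
    calc ∑ j, w x j * (Δ x - Δ j)
        = ∑ j, ((if j = x then (∑ i, w x i) * Δ x else 0) - w x j * Δ j) := by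
          rw [Finset.sum_sub_distrib, Finset.sum_ite_eq' Finset.univ x
            (fun _ => (∑ i, w x i) * Δ x)]
          simp only [Finset.mem_univ, if_true, mul_sub]
          rw [Finset.sum_sub_distrib, ← Finset.sum_mul]
      _ = ∑ j, B x j * Δ j := Finset.sum_congr rfl fun j _ => (h5 j).symm
  -- local minimum principle
  have step_min : ∀ x : Fin n, x ≠ t → (∀ j, G.Adj x j → Δ x ≤ Δ j) →
      x ≠ s ∧ ∀ j, G.Adj x j → Δ j = Δ x := by
    intro x hxt hmin
    have hnonpos : ∀ j ∈ Finset.univ, w x j * (Δ x - Δ j) ≤ 0 := by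
      intro j _
      by_cases hadj : G.Adj x j
      · have := hmin j hadj
        have := (hpos x j hadj).le
        nlinarith
      · simp [hzero x j hadj]
    have hle : ∑ j, w x j * (Δ x - Δ j) ≤ 0 := Finset.sum_nonpos hnonpos
    have hxs : x ≠ s := by
      intro h
      have hsx := hsum x
      rw [if_pos h, if_neg hxt] at hsx
      linarith
    have hz : ∑ j, w x j * (Δ x - Δ j) = 0 := by
      have hsx := hsum x
      rw [if_neg hxs, if_neg hxt] at hsx
      linarith
    refine ⟨hxs, fun j hadj => ?_⟩
    have heach := (Finset.sum_eq_zero_iff_of_nonpos hnonpos).mp hz j (Finset.mem_univ j)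
    have hw := hpos x j hadj
    rcases mul_eq_zero.mp heach with h | h
    · exact absurd h (ne_of_gt hw)
    · linarith
  -- local maximum principle
  have step_max : ∀ x : Fin n, x ≠ t → x ≠ s → (∀ j, G.Adj x j → Δ j ≤ Δ x) →
      ∀ j, G.Adj x j → Δ j = Δ x := by
    intro x hxt hxs hmax
    have hnonneg : ∀ j ∈ Finset.univ, 0 ≤ w x j * (Δ x - Δ j) := by
      intro j _
      by_cases hadj : G.Adj x j
      · have := hmax j hadj
        have := (hpos x j hadj).le
        nlinarith
      · simp [hzero x j hadj]
    have hz : ∑ j, w x j * (Δ x - Δ j) = 0 := by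
      have hsx := hsum x
      rw [if_neg hxs, if_neg hxt] at hsx
      linarith
    intro j hadj
    have heach := (Finset.sum_eq_zero_iff_of_nonneg hnonneg).mp hz j (Finset.mem_univ j)
    have hw := hpos x j hadj
    rcases mul_eq_zero.mp heach with h | h
    · exact absurd h (ne_of_gt hw)
    · linarith
  constructor
  · -- Part 1: change
    intro k hkt hpk
    obtain ⟨p, hp⟩ := hpk
    have hst : s ≠ t := fun h => hp (h ▸ p.start_mem_support)
    set T : Finset (Fin n) :=
      Finset.univ.filter (fun x => x = t ∨ ∃ q : G.Walk s x, t ∉ q.support) with hT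
    have htT : t ∈ T := by simp [hT]
    have hmemT : ∀ x, (∃ q : G.Walk s x, t ∉ q.support) → x ∈ T := by
      intro x hx; simp [hT, hx]
    have hnbr : ∀ x j, (∃ q : G.Walk s x, t ∉ q.support) → G.Adj x j → j ∈ T := by
      rintro x j ⟨q, hq⟩ hadj
      by_cases hjt : j = t
      · exact hjt ▸ htT
      · refine hmemT j ⟨q.concat hadj, ?_⟩
        rw [SimpleGraph.Walk.support_concat]
        simp only [List.concat_eq_append, List.mem_append, List.mem_singleton]
        rintro (h | h)
        · exact hq h
        · exact hjt h.symm
    obtain ⟨k0, hk0T, hk0min⟩ := T.exists_min_image Δ ⟨t, htT⟩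
    have noA : ∀ a, (∃ q : G.Walk s a, t ∉ q.support) → Δ a = Δ k0 → False := by
      intro a ha hA
      have prop : ∀ (u v : Fin n) (q : G.Walk u v), t ∉ q.support →
          (∃ r : G.Walk s u, t ∉ r.support) → Δ u = Δ k0 → v = s → Δ s = Δ k0 := by
        intro u v q
        induction q with
        | nil =>
          intro _ _ hM hvs
          rw [← hvs]; exact hM
        | @cons a c v hadj q' ih =>
          intro hts hu hM hvs
          rw [SimpleGraph.Walk.support_cons, List.mem_cons] at hts
          push_neg at hts
          obtain ⟨hta, htq⟩ := hts
          by_cases has : a = s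
          · rw [← has]; exact hM
          · have hat : a ≠ t := fun h => hta h.symm
            have hminlocal : ∀ j, G.Adj a j → Δ a ≤ Δ j := by
              intro j hadj2
              rw [hM]
              exact hk0min j (hnbr a j hu hadj2)
            have hall := (step_min a hat hminlocal).2
            have hct : c ≠ t := fun h => htq (h ▸ q'.start_mem_support)
            refine ih htq ?_ ?_ hvs
            · obtain ⟨r, hr⟩ := hu
              refine ⟨r.concat hadj, ?_⟩
              rw [SimpleGraph.Walk.support_concat]
              simp only [List.concat_eq_append, List.mem_append, List.mem_singleton]
              rintro (h | h)
              · exact hr h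
              · exact hct h.symm
            · rw [hall c hadj]; exact hM
      obtain ⟨r, hr⟩ := ha
      have hS : Δ s = Δ k0 := by
        refine prop a s r.reverse ?_ ⟨r, hr⟩ hA rfl
        rw [SimpleGraph.Walk.support_reverse, List.mem_reverse]
        exact hr
      have hsA : ∃ q : G.Walk s s, t ∉ q.support :=
        ⟨SimpleGraph.Walk.nil, by simp [Ne.symm hst]⟩
      have hminS : ∀ j, G.Adj s j → Δ s ≤ Δ j := by
        intro j hadj
        rw [hS]
        exact hk0min j (hnbr s j hsA hadj)
      exact (step_min s hst hminS).1 rfl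
    have hk0t : k0 = t := by
      rcases Finset.mem_filter.mp hk0T with ⟨_, h | hA⟩
      · exact h
      · exact (noA k0 hA rfl).elim
    have hkT : k ∈ T := hmemT k ⟨p, hp⟩
    have h0le : 0 ≤ Δ k := by
      have := hk0min k hkT
      rw [hk0t, hΔt] at this
      exact this
    rcases lt_or_eq_of_le h0le with h | h
    · exact h
    · exact (noA k ⟨p, hp⟩ (by rw [hk0t, hΔt, ← h])).elim
  · -- Part 2: no change
    intro k hkt hk
    show Δ k = 0
    have hknA : ∀ x, (∃ q : G.Walk k x, t ∉ q.support) → x ≠ s ∧ x ≠ t := by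
      rintro x ⟨q, hq⟩
      constructor
      · intro h
        subst h
        have := hk q.reverse
        rw [SimpleGraph.Walk.support_reverse, List.mem_reverse] at this
        exact hq this
      · exact fun h => hq (h ▸ q.end_mem_support)
    set U : Finset (Fin n) :=
      Finset.univ.filter (fun x => x = t ∨ ∃ q : G.Walk k x, t ∉ q.support) with hU
    have htU : t ∈ U := by simp [hU]
    have hmemU : ∀ x, (∃ q : G.Walk k x, t ∉ q.support) → x ∈ U := by
      intro x hx; simp [hU, hx]
    have hkU : k ∈ U := hmemU k ⟨SimpleGraph.Walk.nil, by simp [Ne.symm hkt]⟩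
    have hnbrU : ∀ x j, (∃ q : G.Walk k x, t ∉ q.support) → G.Adj x j → j ∈ U := by
      rintro x j ⟨q, hq⟩ hadj
      by_cases hjt : j = t
      · exact hjt ▸ htU
      · refine hmemU j ⟨q.concat hadj, ?_⟩
        rw [SimpleGraph.Walk.support_concat]
        simp only [List.concat_eq_append, List.mem_append, List.mem_singleton]
        rintro (h | h)
        · exact hq h
        · exact hjt h.symm
    have prop2 : ∀ (M : ℝ),
        (∀ x, (∃ q : G.Walk k x, t ∉ q.support) → Δ x = M → ∀ j, G.Adj x j → Δ j = M) →
        ∀ (u v : Fin n) (q : G.Walk u v),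
          (u = t ∨ ∃ r : G.Walk k u, t ∉ r.support) → Δ u = M → v = t → Δ t = M := by
      intro M Hstep u v q
      induction q with
      | nil =>
        intro _ hM hvt
        rw [← hvt]; exact hM
      | @cons a c v hadj q' ih =>
        intro hmem hM hvt
        by_cases hat : a = t
        · rw [← hat]; exact hM
        · have ha : ∃ r : G.Walk k a, t ∉ r.support := hmem.resolve_left hat
          have hc : Δ c = M := Hstep a ha hM c hadj
          refine ih ?_ hc hvt
          by_cases hct : c = t
          · exact Or.inl hct
          · right
            obtain ⟨r, hr⟩ := ha
            refine ⟨r.concat hadj, ?_⟩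
            rw [SimpleGraph.Walk.support_concat]
            simp only [List.concat_eq_append, List.mem_append, List.mem_singleton]
            rintro (h | h)
            · exact hr h
            · exact hct h.symm
    -- lower bound
    have hlow : ∀ x ∈ U, 0 ≤ Δ x := by
      obtain ⟨k1, hk1U, hk1min⟩ := U.exists_min_image Δ ⟨t, htU⟩
      have hk1 : Δ k1 = 0 := by
        rcases Finset.mem_filter.mp hk1U with ⟨_, h | hA⟩
        · rw [h, hΔt]
        · have Hstep : ∀ x, (∃ q : G.Walk k x, t ∉ q.support) →
              Δ x = Δ k1 → ∀ j, G.Adj x j → Δ j = Δ k1 := by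
            intro x hx hxM j hadj
            have hminl : ∀ j', G.Adj x j' → Δ x ≤ Δ j' := by
              intro j' hadj'
              rw [hxM]
              exact hk1min j' (hnbrU x j' hx hadj')
            rw [(step_min x (hknA x hx).2 hminl).2 j hadj, hxM]
          have hwalk : G.Walk k1 t := (hconn.preconnected k1 t).some
          have := prop2 (Δ k1) Hstep k1 t hwalk (Or.inr hA) rfl rfl
          rw [hΔt] at this
          exact this.symm
      intro x hxU
      have := hk1min x hxU
      rw [hk1] at this
      exact this
    -- upper bound
    have hhigh : ∀ x ∈ U, Δ x ≤ 0 := by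
      obtain ⟨k2, hk2U, hk2max⟩ := U.exists_max_image Δ ⟨t, htU⟩
      have hk2 : Δ k2 = 0 := by
        rcases Finset.mem_filter.mp hk2U with ⟨_, h | hA⟩
        · rw [h, hΔt]
        · have Hstep : ∀ x, (∃ q : G.Walk k x, t ∉ q.support) →
              Δ x = Δ k2 → ∀ j, G.Adj x j → Δ j = Δ k2 := by
            intro x hx hxM j hadj
            have hmaxl : ∀ j', G.Adj x j' → Δ j' ≤ Δ x := by
              intro j' hadj'
              rw [hxM]
              exact hk2max j' (hnbrU x j' hx hadj')
            rw [step_max x (hknA x hx).2 (hknA x hx).1 hmaxl j hadj, hxM]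
          have hwalk : G.Walk k2 t := (hconn.preconnected k2 t).some
          have := prop2 (Δ k2) Hstep k2 t hwalk (Or.inr hA) rfl rfl
          rw [hΔt] at this
          exact this.symm
      intro x hxU
      have := hk2max x hxU
      rw [hk2] at this
      exact this
    exact le_antisymm (hhigh k hkU) (hlow k hkU)
end
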